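/- arXiv:0710.0293 — 6 statements merged into one kernel-verified Lean document; each statement's English description precedes it below -/
import Mathlib

section
/- Let F : [−1,1] → ℝ be a continuous function, let Ω be a unit vector in ℝ³, and let B be a real 3×3 matrix such that BΩ = 0. Then the projection onto the plane orthogonal to Ω of the vector ∫_{S²} F(⟨ω,Ω⟩) (ωᵀ B ω) ω dω equals ( (1/2) ∫_{S²} F(⟨ω,Ω⟩) ⟨ω,Ω⟩ (1 − ⟨ω,Ω⟩²) dω ) · Bᵀ Ω; that is, (Id − Ω⊗Ω) ∫_{S²} F(⟨ω,Ω⟩) (ωᵀ B ω) ω dω = ( (1/2) ∫_{S²} F(⟨ω,Ω⟩) ⟨ω,Ω⟩ (1 − ⟨ω,Ω⟩²) dω ) Bᵀ Ω. -/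
open scoped RealInnerProductSpace
open MeasureTheory Metric
open scoped Pointwise

noncomputable abbrev E3 := EuclideanSpace ℝ (Fin 3)

/-- The surface measure on the unit sphere `S²` in `ℝ³`. -/
noncomputable def sphereMeasure :
    Measure (Metric.sphere (0 : EuclideanSpace ℝ (Fin 3)) 1) :=
  (volume : Measure (EuclideanSpace ℝ (Fin 3))).toSphere

instance : IsFiniteMeasure sphereMeasure := by
  unfold sphereMeasure; infer_instance

lemma cont_integrable {G : Type*} [NormedAddCommGroup G]
    (f : Metric.sphere (0 : E3) 1 → G) (hf : Continuous f) :
    Integrable f sphereMeasure := by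
  obtain ⟨C, hC⟩ := (isCompact_range (hf.norm)).bddAbove
  exact ⟨hf.aestronglyMeasurable,
    HasFiniteIntegral.of_bounded (C := C) (ae_of_all _ fun x => hC ⟨x, rfl⟩)⟩

/-- signed-permutation isometry of `E3`. -/
noncomputable def signPerm (s : Fin 3 → ℝ) (hs : ∀ i, s i * s i = 1)
    (σ : Equiv.Perm (Fin 3)) : E3 ≃ₗᵢ[ℝ] E3 :=
  LinearEquiv.isometryOfInner
    { toFun := fun x => (WithLp.equiv 2 (Fin 3 → ℝ)).symm (fun i => s i * x (σ i))
      invFun := fun y => (WithLp.equiv 2 (Fin 3 → ℝ)).symm (fun i => s (σ.symm i) * y (σ.symm i))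
      map_add' := by intro x y; ext i; simp [mul_add]
      map_smul' := by intro c x; ext i; simp [mul_comm, mul_left_comm]
      left_inv := by
        intro x; ext i
        simp only [WithLp.equiv_symm_apply, PiLp.toLp_apply]
        rw [Equiv.apply_symm_apply, ← mul_assoc, hs _, one_mul]
      right_inv := by
        intro x; ext i
        simp only [WithLp.equiv_symm_apply, PiLp.toLp_apply]
        rw [Equiv.symm_apply_apply, ← mul_assoc, hs _, one_mul] }
    (by
      intro x y
      simp only [LinearEquiv.coe_mk, Equiv.coe_fn_mk]
      rw [PiLp.inner_apply, PiLp.inner_apply]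
      simp only [RCLike.inner_apply, starRingEnd_apply, star_trivial,
        WithLp.equiv_symm_apply, PiLp.toLp_apply, LinearMap.coe_mk, AddHom.coe_mk]
      rw [← Equiv.sum_comp σ (fun i => y i * x i)]
      refine Finset.sum_congr rfl fun i _ => ?_
      rw [mul_mul_mul_comm, hs i, one_mul])

lemma signPerm_apply (s : Fin 3 → ℝ) (hs : ∀ i, s i * s i = 1)
    (σ : Equiv.Perm (Fin 3)) (x : E3) (i : Fin 3) :
    signPerm s hs σ x i = s i * x (σ i) := rfl

/-- the self-map of the unit sphere induced by a linear isometry equivalence -/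
noncomputable def sphMap (e : E3 ≃ₗᵢ[ℝ] E3) (ω : sphere (0 : E3) 1) : sphere (0 : E3) 1 :=
  ⟨e ω, by
    rw [mem_sphere_zero_iff_norm, e.norm_map]
    exact mem_sphere_zero_iff_norm.1 ω.2⟩

lemma continuous_sphMap (e : E3 ≃ₗᵢ[ℝ] E3) : Continuous (sphMap e) :=
  Continuous.subtype_mk (e.continuous.comp continuous_subtype_val) _

lemma map_sphMap (e : E3 ≃ₗᵢ[ℝ] E3) :
    Measure.map (sphMap e) sphereMeasure = sphereMeasure := by
  have hm : Measurable (sphMap e) := (continuous_sphMap e).measurable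
  ext s hs
  rw [Measure.map_apply hm hs, sphereMeasure, Measure.toSphere_apply' _ hs,
    Measure.toSphere_apply' _ (hm hs)]
  congr 1
  have himg : (Subtype.val '' (sphMap e ⁻¹' s)) = e ⁻¹' (Subtype.val '' s) := by
    ext x
    constructor
    · rintro ⟨⟨y, hy⟩, hmem, rfl⟩
      exact ⟨sphMap e ⟨y, hy⟩, hmem, rfl⟩
    · rintro ⟨⟨z, hz⟩, hzs, hex⟩
      have hx : x ∈ sphere (0 : E3) 1 := by
        have : ‖e x‖ = 1 := by rw [← hex]; exact mem_sphere_zero_iff_norm.1 hz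
        rw [mem_sphere_zero_iff_norm, ← e.norm_map]; exact this
      refine ⟨⟨x, hx⟩, ?_, rfl⟩
      have : sphMap e ⟨x, hx⟩ = ⟨z, hz⟩ := Subtype.ext hex.symm
      rw [Set.mem_preimage, this]; exact hzs
  rw [himg]
  have hsmul : (Set.Ioo (0:ℝ) 1 • (e ⁻¹' (Subtype.val '' s)))
      = e ⁻¹' (Set.Ioo (0:ℝ) 1 • (Subtype.val '' s)) := by
    ext x
    simp only [Set.mem_smul, Set.mem_preimage]
    constructor
    · rintro ⟨c, hc, y, hy, rfl⟩
      exact ⟨c, hc, e y, hy, by simp⟩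
    · rintro ⟨c, hc, y, hy, hxy⟩
      refine ⟨c, hc, e.symm y, by simpa using hy, ?_⟩
      apply e.injective
      simp [hxy]
  rw [hsmul]
  exact (e.measurePreserving).measure_preimage_emb
    (e.toHomeomorph.measurableEmbedding) _

lemma integral_comp_sphMap {G : Type*} [NormedAddCommGroup G] [NormedSpace ℝ G]
    (e : E3 ≃ₗᵢ[ℝ] E3) (f : sphere (0 : E3) 1 → G) (hf : Continuous f) :
    ∫ ω, f (sphMap e ω) ∂sphereMeasure = ∫ ω, f ω ∂sphereMeasure := by
  conv_rhs => rw [← map_sphMap e]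
  rw [integral_map (continuous_sphMap e).measurable.aemeasurable]
  rw [map_sphMap e]
  exact hf.aestronglyMeasurable

theorem sphere_third_moment_projection
    (F : ℝ → ℝ) (hF : ContinuousOn F (Set.Icc (-1) 1))
    (Ω : EuclideanSpace ℝ (Fin 3)) (hΩ : ‖Ω‖ = 1)
    (B : Matrix (Fin 3) (Fin 3) ℝ) (hB : B.mulVec (fun i => Ω i) = 0)
    (X : EuclideanSpace ℝ (Fin 3))
    (hX : X = ∫ ω : Metric.sphere (0 : EuclideanSpace ℝ (Fin 3)) 1,
        (F ⟪(ω : EuclideanSpace ℝ (Fin 3)), Ω⟫ *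
            ∑ j : Fin 3, ∑ k : Fin 3,
              (ω : EuclideanSpace ℝ (Fin 3)) j * B j k * (ω : EuclideanSpace ℝ (Fin 3)) k) •
          (ω : EuclideanSpace ℝ (Fin 3)) ∂sphereMeasure) :
    X - ⟪Ω, X⟫ • Ω
      = ((1 / 2) * ∫ ω : Metric.sphere (0 : EuclideanSpace ℝ (Fin 3)) 1,
            F ⟪(ω : EuclideanSpace ℝ (Fin 3)), Ω⟫ * ⟪(ω : EuclideanSpace ℝ (Fin 3)), Ω⟫ *
              (1 - ⟪(ω : EuclideanSpace ℝ (Fin 3)), Ω⟫ ^ 2) ∂sphereMeasure) •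
          (WithLp.equiv 2 (Fin 3 → ℝ)).symm (B.transpose.mulVec fun i => Ω i) := by
  classical
  -- an orthonormal basis whose last vector is Ω
  obtain ⟨b, hb2⟩ : ∃ b : OrthonormalBasis (Fin 3) ℝ (EuclideanSpace ℝ (Fin 3)), b 2 = Ω := by
    have hcard : Module.finrank ℝ (EuclideanSpace ℝ (Fin 3)) = Fintype.card (Fin 3) := by
      simp [finrank_euclideanSpace]
    have horth : Orthonormal ℝ (({2} : Set (Fin 3)).restrict (fun _ : Fin 3 => Ω)) := by
      constructor
      · intro i; exact hΩ
      · intro i j hij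
        exfalso; apply hij
        apply Subtype.ext
        have hi := i.2; have hj := j.2
        simp only [Set.mem_singleton_iff] at hi hj
        rw [hi, hj]
    obtain ⟨b, hb⟩ := horth.exists_orthonormalBasis_extension_of_card_eq hcard
    exact ⟨b, hb 2 rfl⟩
  set v : E3 := (WithLp.equiv 2 (Fin 3 → ℝ)).symm (B.transpose.mulVec fun i => Ω i) with hv
  -- the bilinear form of B
  obtain ⟨βL, hβL_apply⟩ : ∃ βL : E3 →ₗ[ℝ] E3 →ₗ[ℝ] ℝ,
      ∀ x y : E3, βL x y = ∑ j : Fin 3, ∑ k : Fin 3, x j * B j k * y k := by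
    refine ⟨LinearMap.mk₂ ℝ
      (fun x y => ∑ j : Fin 3, ∑ k : Fin 3, x j * B j k * y k)
      (by intro x x' y; simp [PiLp.add_apply, add_mul, Finset.sum_add_distrib])
      (by intro c x y
          simp only [PiLp.smul_apply, smul_eq_mul, Finset.mul_sum]
          refine Finset.sum_congr rfl fun j _ => Finset.sum_congr rfl fun k _ => by ring)
      (by intro x y y'; simp [PiLp.add_apply, mul_add, Finset.sum_add_distrib])
      (by intro c x y
          simp only [PiLp.smul_apply, smul_eq_mul, Finset.mul_sum]
          refine Finset.sum_congr rfl fun j _ => Finset.sum_congr rfl fun k _ => by ring),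
      fun x y => rfl⟩
  have hB' : ∀ j, ∑ k : Fin 3, B j k * Ω k = 0 := by
    intro j
    have := congrFun hB j
    simpa [Matrix.mulVec, dotProduct] using this
  have hβΩ : ∀ x : E3, βL x Ω = 0 := by
    intro x
    rw [hβL_apply]
    have : ∀ j : Fin 3, ∑ k : Fin 3, x j * B j k * Ω k = 0 := by
      intro j
      have : ∑ k : Fin 3, x j * B j k * Ω k = x j * ∑ k : Fin 3, B j k * Ω k := by
        rw [Finset.mul_sum]; exact Finset.sum_congr rfl fun k _ => by ring
      rw [this, hB' j, mul_zero]
    simp [this]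
  have hβΩ' : ∀ y : E3, βL Ω y = ⟪v, y⟫ := by
    intro y
    rw [hβL_apply, PiLp.inner_apply]
    rw [Finset.sum_comm]
    refine Finset.sum_congr rfl fun k _ => ?_
    simp only [RCLike.inner_apply, starRingEnd_apply, star_trivial]
    have hvk : v k = ∑ j : Fin 3, B j k * Ω j := by
      simp [hv, Matrix.mulVec, dotProduct, Matrix.transpose_apply]
    rw [hvk, Finset.mul_sum]
    exact Finset.sum_congr rfl fun j _ => by ring
  -- coordinates
  have hinner_p : ∀ (i : Fin 3) (x : E3), ⟪b i, x⟫ = b.repr x i :=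
    fun i x => (b.repr_apply_apply x i).symm
  have ht : ∀ ω : sphere (0:E3) 1, ⟪(ω:E3), Ω⟫ = b.repr (ω:E3) 2 := by
    intro ω
    rw [← hb2, real_inner_comm, hinner_p]
  have hnorm1 : ∀ ω : sphere (0:E3) 1, ‖(ω:E3)‖ = 1 :=
    fun ω => mem_sphere_zero_iff_norm.1 ω.2
  have contp : ∀ i : Fin 3, Continuous fun ω : sphere (0:E3) 1 => b.repr (ω:E3) i := by
    intro i
    have : (fun ω : sphere (0:E3) 1 => b.repr (ω:E3) i)
        = fun ω : sphere (0:E3) 1 => ⟪b i, (ω:E3)⟫ :=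
      funext fun ω => (hinner_p i _).symm
    rw [this]
    exact Continuous.inner continuous_const continuous_subtype_val
  have contF : Continuous fun ω : sphere (0:E3) 1 => F (b.repr (ω:E3) 2) := by
    apply hF.comp_continuous (contp 2)
    intro ω
    rw [← hinner_p]
    have h1 := abs_real_inner_le_norm (b 2) (ω:E3)
    rw [hnorm1 ω, b.orthonormal.1 2, one_mul] at h1
    exact Set.mem_Icc.2 (abs_le.1 h1)
  -- the moment integrals
  set N : Fin 3 → Fin 3 → Fin 3 → ℝ := fun j k i =>
    ∫ ω : sphere (0:E3) 1, F (b.repr (ω:E3) 2) *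
      (b.repr (ω:E3) j * b.repr (ω:E3) k * b.repr (ω:E3) i) ∂sphereMeasure with hN
  have contNint : ∀ j k i : Fin 3, Continuous fun ω : sphere (0:E3) 1 =>
      F (b.repr (ω:E3) 2) *
        (b.repr (ω:E3) j * b.repr (ω:E3) k * b.repr (ω:E3) i) :=
    fun j k i => contF.mul (((contp j).mul (contp k)).mul (contp i))
  have intN : ∀ j k i : Fin 3, Integrable (fun ω : sphere (0:E3) 1 =>
      F (b.repr (ω:E3) 2) *
        (b.repr (ω:E3) j * b.repr (ω:E3) k * b.repr (ω:E3) i)) sphereMeasure :=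
    fun j k i => cont_integrable _ (contNint j k i)
  -- moment transformation under signed permutations
  have hmom : ∀ (s : Fin 3 → ℝ) (hs : ∀ a, s a * s a = 1) (σ : Equiv.Perm (Fin 3)),
      σ 2 = 2 → s 2 = 1 → ∀ j k i : Fin 3,
      N j k i = (s j * s k * s i) * N (σ j) (σ k) (σ i) := by
    intro s hs σ hσ2 hs2 j k i
    set e := (b.repr.trans (signPerm s hs σ)).trans b.repr.symm with he
    have hcoord : ∀ (a : Fin 3) (ω : sphere (0:E3) 1),
        b.repr ((sphMap e ω : sphere (0:E3) 1) : E3) a = s a * b.repr (ω:E3) (σ a) := by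
      intro a ω
      show b.repr (e (ω:E3)) a = _
      have h1 : b.repr (e (ω:E3)) = signPerm s hs σ (b.repr (ω:E3)) := by
        simp [he, LinearIsometryEquiv.trans_apply]
      rw [h1, signPerm_apply]
    have := integral_comp_sphMap e _ (contNint j k i)
    simp only [hN]
    rw [← this]
    have heq : (fun ω : sphere (0:E3) 1 =>
        F (b.repr ((sphMap e ω : sphere (0:E3) 1) : E3) 2) *
        (b.repr ((sphMap e ω : sphere (0:E3) 1) : E3) j *
          b.repr ((sphMap e ω : sphere (0:E3) 1) : E3) k *
          b.repr ((sphMap e ω : sphere (0:E3) 1) : E3) i))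
        = fun ω : sphere (0:E3) 1 => (s j * s k * s i) *
          (F (b.repr (ω:E3) 2) *
            (b.repr (ω:E3) (σ j) * b.repr (ω:E3) (σ k) * b.repr (ω:E3) (σ i))) := by
      funext ω
      rw [hcoord, hcoord, hcoord, hcoord, hσ2, hs2, one_mul]
      ring
    rw [heq, integral_const_mul]
  -- vanishing moments: odd number of occurrences of an index m ≠ 2
  have hflip : ∀ m : Fin 3, m ≠ 2 → ∀ j k i : Fin 3,
      N j k i = ((if j = m then (-1:ℝ) else 1) * (if k = m then (-1:ℝ) else 1) *
        (if i = m then (-1:ℝ) else 1)) * N j k i := by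
    intro m hm j k i
    have := hmom (fun a => if a = m then (-1:ℝ) else 1)
      (fun a => by by_cases h : a = m <;> simp [h]) 1 rfl
      (by show (if (2:Fin 3) = m then (-1:ℝ) else 1) = 1; rw [if_neg (fun h => hm h.symm)]) j k i
    simpa using this
  have hzero : ∀ j k i : Fin 3, ∀ m : Fin 3, m ≠ 2 →
      ((if j = m then (-1:ℝ) else 1) * (if k = m then (-1:ℝ) else 1) *
        (if i = m then (-1:ℝ) else 1)) = -1 → N j k i = 0 := by
    intro j k i m hm hsign
    have h := hflip m hm j k i
    rw [hsign] at h
    linarith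
  have hswap : N 2 0 0 = N 2 1 1 := by
    have h := hmom (fun _ => 1) (fun _ => by norm_num) (Equiv.swap 0 1)
      (Equiv.swap_apply_of_ne_of_ne (by decide) (by decide)) rfl 2 0 0
    simpa [Equiv.swap_apply_of_ne_of_ne] using h
  -- the coordinate sum constraint
  have hnormsum : ∀ ω : sphere (0:E3) 1,
      (b.repr (ω:E3) 0)^2 + (b.repr (ω:E3) 1)^2 + (b.repr (ω:E3) 2)^2 = 1 := by
    intro ω
    have h1 : ⟪b.repr (ω:E3), b.repr (ω:E3)⟫ = ⟪(ω:E3), (ω:E3)⟫ :=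
      b.repr.inner_map_map _ _
    rw [PiLp.inner_apply] at h1
    simp only [RCLike.inner_apply, starRingEnd_apply, star_trivial] at h1
    rw [Fin.sum_univ_three] at h1
    rw [real_inner_self_eq_norm_mul_norm, hnorm1 ω] at h1
    nlinarith [h1]
  -- the coefficient
  have hcoef : N 2 0 0 = (1 / 2) * ∫ ω : Metric.sphere (0 : EuclideanSpace ℝ (Fin 3)) 1,
      F ⟪(ω : EuclideanSpace ℝ (Fin 3)), Ω⟫ * ⟪(ω : EuclideanSpace ℝ (Fin 3)), Ω⟫ *
        (1 - ⟪(ω : EuclideanSpace ℝ (Fin 3)), Ω⟫ ^ 2) ∂sphereMeasure := by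
    have hh : (∫ ω : Metric.sphere (0 : EuclideanSpace ℝ (Fin 3)) 1,
        F ⟪(ω : EuclideanSpace ℝ (Fin 3)), Ω⟫ * ⟪(ω : EuclideanSpace ℝ (Fin 3)), Ω⟫ *
          (1 - ⟪(ω : EuclideanSpace ℝ (Fin 3)), Ω⟫ ^ 2) ∂sphereMeasure)
        = N 2 0 0 + N 2 1 1 := by
      simp only [hN]
      rw [← integral_add (intN 2 0 0) (intN 2 1 1)]
      apply integral_congr_ae
      apply Filter.Eventually.of_forall
      intro ω
      beta_reduce
      rw [ht ω]
      have h2 : (1:ℝ) - (b.repr (ω:E3) 2)^2 = (b.repr (ω:E3) 0)^2 + (b.repr (ω:E3) 1)^2 := by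
        have := hnormsum ω; linarith
      rw [h2]
      ring
    rw [hswap] at hh ⊢
    linarith
  -- expansion of the quadratic form in the basis
  have hβexp : ∀ x : E3, βL x x
      = ∑ j : Fin 3, ∑ k : Fin 3, b.repr x j * b.repr x k * βL (b j) (b k) := by
    intro x
    conv_lhs => rw [← b.sum_repr x]
    rw [_root_.map_sum βL (fun j => b.repr x j • b j) Finset.univ, LinearMap.sum_apply]
    refine Finset.sum_congr rfl fun j _ => ?_
    rw [_root_.map_smul βL, LinearMap.smul_apply, smul_eq_mul,
      _root_.map_sum (βL (b j)) (fun k => b.repr x k • b k) Finset.univ, Finset.mul_sum]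
    refine Finset.sum_congr rfl fun k _ => ?_
    rw [_root_.map_smul (βL (b j)), smul_eq_mul]
    ring
  -- the vector-valued integrand is integrable
  have hFeq : (fun ω : sphere (0:E3) 1 => F ⟪(ω:E3), Ω⟫)
      = fun ω : sphere (0:E3) 1 => F (b.repr (ω:E3) 2) :=
    funext fun ω => by rw [ht ω]
  have contβ : Continuous fun ω : sphere (0:E3) 1 => βL (ω:E3) (ω:E3) := by
    have : (fun ω : sphere (0:E3) 1 => βL (ω:E3) (ω:E3))
        = fun ω : sphere (0:E3) 1 => ∑ j : Fin 3, ∑ k : Fin 3,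
            b.repr (ω:E3) j * b.repr (ω:E3) k * βL (b j) (b k) :=
      funext fun ω => hβexp _
    rw [this]
    exact continuous_finset_sum _ fun j _ => continuous_finset_sum _ fun k _ =>
      ((contp j).mul (contp k)).mul continuous_const
  have contf : Continuous fun ω : sphere (0:E3) 1 =>
      (F ⟪(ω:E3), Ω⟫ * βL (ω:E3) (ω:E3)) • (ω:E3) := by
    refine Continuous.smul (f := fun ω : sphere (0:E3) 1 => F ⟪(ω:E3), Ω⟫ * βL (ω:E3) (ω:E3)) ?_ ?_
    · apply Continuous.mul
      · rw [hFeq]; exact contF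
      · exact contβ
    · exact continuous_subtype_val
  have hfint : Integrable (fun ω : sphere (0:E3) 1 =>
      (F ⟪(ω:E3), Ω⟫ * βL (ω:E3) (ω:E3)) • (ω:E3)) sphereMeasure :=
    cont_integrable _ contf
  -- the coordinates of X
  have hXf : X = ∫ ω : sphere (0:E3) 1,
      (F ⟪(ω:E3), Ω⟫ * βL (ω:E3) (ω:E3)) • (ω:E3) ∂sphereMeasure := by
    rw [hX]
    refine integral_congr_ae (Filter.Eventually.of_forall fun ω => ?_)
    beta_reduce
    rw [hβL_apply]
  have hXi : ∀ i : Fin 3, ⟪b i, X⟫ = ∑ j : Fin 3, ∑ k : Fin 3, βL (b j) (b k) * N j k i := by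
    intro i
    rw [hXf]
    have h0 : ⟪b i, ∫ ω : sphere (0:E3) 1,
          (F ⟪(ω:E3), Ω⟫ * βL (ω:E3) (ω:E3)) • (ω:E3) ∂sphereMeasure⟫
        = ∫ ω : sphere (0:E3) 1,
            ⟪b i, (F ⟪(ω:E3), Ω⟫ * βL (ω:E3) (ω:E3)) • (ω:E3)⟫ ∂sphereMeasure :=
      (ContinuousLinearMap.integral_comp_comm (innerSL ℝ (b i)) hfint).symm
    rw [h0]
    have key : (fun ω : sphere (0:E3) 1 =>
        ⟪b i, (F ⟪(ω:E3), Ω⟫ * βL (ω:E3) (ω:E3)) • (ω:E3)⟫)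
        = fun ω : sphere (0:E3) 1 => ∑ j : Fin 3, ∑ k : Fin 3, βL (b j) (b k) *
            (F (b.repr (ω:E3) 2) *
              (b.repr (ω:E3) j * b.repr (ω:E3) k * b.repr (ω:E3) i)) := by
      funext ω
      rw [real_inner_smul_right, hinner_p, ht ω, hβexp]
      simp only [Finset.mul_sum, Finset.sum_mul]
      exact Finset.sum_congr rfl fun j _ => Finset.sum_congr rfl fun k _ => by ring
    rw [key]
    rw [integral_finset_sum _ (fun j _ => integrable_finset_sum _ (fun k _ =>
      (intN j k i).const_mul _))]
    refine Finset.sum_congr rfl fun j _ => ?_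
    rw [integral_finset_sum _ (fun k _ => (intN j k i).const_mul _)]
    refine Finset.sum_congr rfl fun k _ => ?_
    rw [integral_const_mul]
  -- values of the bilinear form on basis vectors
  have hγ2 : ∀ j : Fin 3, βL (b j) (b 2) = 0 := fun j => by rw [hb2]; exact hβΩ _
  have hγv : ∀ k : Fin 3, βL (b 2) (b k) = ⟪v, b k⟫ := by
    intro k
    have h := hβΩ' (b k)
    rw [← hb2] at h
    exact h
  have hvb2 : ⟪v, b 2⟫ = 0 := by rw [← hγv 2]; exact hγ2 2
  -- evaluate the two tangential coordinates of X
  have hX0 : ⟪b 0, X⟫ = ⟪v, b 0⟫ * N 2 0 0 := by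
    rw [hXi 0, Fin.sum_univ_three, Fin.sum_univ_three, Fin.sum_univ_three,
      Fin.sum_univ_three]
    rw [hγ2 0, hγ2 1, hγ2 2, hγv 0, hγv 1,
      hzero 0 0 0 0 (by decide) (by simp),
      hzero 0 1 0 1 (by decide) (by simp),
      hzero 1 0 0 1 (by decide) (by simp),
      hzero 1 1 0 0 (by decide) (by simp),
      hzero 2 1 0 0 (by decide) (by simp)]
    ring
  have hX1 : ⟪b 1, X⟫ = ⟪v, b 1⟫ * N 2 0 0 := by
    rw [hXi 1, Fin.sum_univ_three, Fin.sum_univ_three, Fin.sum_univ_three,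
      Fin.sum_univ_three]
    rw [hγ2 0, hγ2 1, hγ2 2, hγv 0, hγv 1,
      hzero 0 0 1 1 (by decide) (by simp),
      hzero 0 1 1 0 (by decide) (by simp),
      hzero 1 0 1 0 (by decide) (by simp),
      hzero 1 1 1 1 (by decide) (by simp),
      hzero 2 0 1 0 (by decide) (by simp)]
    rw [← hswap]
    ring
  -- conclude coordinatewise
  rw [← hcoef]
  refine b.toBasis.ext_elem fun i => ?_
  rw [b.coe_toBasis_repr_apply, b.coe_toBasis_repr_apply, ← hinner_p, ← hinner_p]
  rw [inner_sub_right, real_inner_smul_right, real_inner_smul_right]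
  rw [← hb2]
  have hi3 : i = 0 ∨ i = 1 ∨ i = 2 := by omega
  rcases hi3 with rfl | rfl | rfl
  · rw [hX0, b.orthonormal.2 (show (0:Fin 3) ≠ 2 by decide), mul_zero, sub_zero,
      real_inner_comm v (b 0)]
    ring
  · rw [hX1, b.orthonormal.2 (show (1:Fin 3) ≠ 2 by decide), mul_zero, sub_zero,
      real_inner_comm v (b 1)]
    ring
  · have h22 : ⟪b 2, b 2⟫ = (1:ℝ) := by
      rw [real_inner_self_eq_norm_mul_norm, b.orthonormal.1 2, one_mul]
    rw [h22, ← real_inner_comm (b 2) v, hvb2]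
    ring
end

section
/- Let K : ℝ → ℝ be a continuous compactly supported function and let j : ℝ³ → ℝ³ be twice continuously differentiable with bounded second derivative. Fix x ∈ ℝ³. Then there exists a constant C ≥ 0 such that for every ε ∈ (0,1], ‖ ∫_{ℝ³} K(‖z‖) j(x + εz) dz − ( ∫_{ℝ³} K(‖z‖) dz ) j(x) ‖ ≤ C ε². (The first-order term in ε vanishes because the kernel K(‖z‖) is isotropic, so that ∫ K(‖z‖) z dz = 0.) -/
open MeasureTheory

local notation "E" => EuclideanSpace ℝ (Fin 3)

lemma aux_integrable {V : Type*} [NormedAddCommGroup V] [NormedSpace ℝ V]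
    (K : ℝ → ℝ) (hK : Continuous K) (hKsupp : HasCompactSupport K)
    (F : E → V) (hF : Continuous F) :
    Integrable (fun z : E => K ‖z‖ • F z) := by
  obtain ⟨R, hR⟩ := hKsupp.isCompact.isBounded.subset_closedBall 0
  apply Continuous.integrable_of_hasCompactSupport ((hK.comp continuous_norm).smul hF)
  apply HasCompactSupport.of_support_subset_isCompact (isCompact_closedBall (0:E) R)
  intro z hz
  have hz' : K ‖z‖ ≠ 0 := by
    intro h; apply hz; simp [h]
  have : ‖z‖ ∈ tsupport K := subset_tsupport K hz'
  have := hR this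
  simpa using this

lemma aux_lip (j : E → E) (hj : ContDiff ℝ 2 j) (M : ℝ)
    (hM : ∀ y : E, ‖iteratedFDeriv ℝ 2 j y‖ ≤ M) (a b : E) :
    ‖fderiv ℝ j a - fderiv ℝ j b‖ ≤ M * ‖a - b‖ := by
  have hd : ContDiff ℝ 1 (fderiv ℝ j) := hj.fderiv_right (le_refl _)
  have := convex_univ.norm_image_sub_le_of_norm_fderiv_le
    (f := fderiv ℝ j) (C := M) (fun y _ => (hd.differentiable one_ne_zero).differentiableAt)
    (fun y _ => by
      have hM0 : 0 ≤ M := le_trans (norm_nonneg _) (hM y)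
      refine ContinuousLinearMap.opNorm_le_bound _ hM0 fun u => ?_
      refine ContinuousLinearMap.opNorm_le_bound _ (by positivity) fun v => ?_
      have h2 : fderiv ℝ (fderiv ℝ j) y u v = iteratedFDeriv ℝ 2 j y ![u, v] := by
        rw [iteratedFDeriv_two_apply]; simp
      rw [h2]
      calc ‖iteratedFDeriv ℝ 2 j y ![u, v]‖
          ≤ ‖iteratedFDeriv ℝ 2 j y‖ * ∏ i, ‖(![u, v]) i‖ :=
            (iteratedFDeriv ℝ 2 j y).le_opNorm _
        _ = ‖iteratedFDeriv ℝ 2 j y‖ * (‖u‖ * ‖v‖) := by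
            rw [Fin.prod_univ_two]; simp
        _ ≤ M * (‖u‖ * ‖v‖) := by
            apply mul_le_mul_of_nonneg_right (hM y) (by positivity)
        _ = M * ‖u‖ * ‖v‖ := by ring) (Set.mem_univ b) (Set.mem_univ a)
  exact this

lemma aux_taylor (j : E → E) (hj : ContDiff ℝ 2 j) (M : ℝ)
    (hM : ∀ y : E, ‖iteratedFDeriv ℝ 2 j y‖ ≤ M) (x v : E) :
    ‖j (x + v) - j x - fderiv ℝ j x v‖ ≤ M * ‖v‖ ^ 2 := by
  set L := fderiv ℝ j x with hL
  have hdj : Differentiable ℝ j := hj.differentiable two_ne_zero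
  have key : ∀ w : E, HasFDerivAt (fun w : E => j (x + w) - L w)
      (fderiv ℝ j (x + w) - L) w := by
    intro w
    have h1 : HasFDerivAt (fun w : E => j (x + w)) (fderiv ℝ j (x + w)) w := by
      have := (hdj (x + w)).hasFDerivAt.comp w ((hasFDerivAt_id w).const_add x)
      simpa [Function.comp_def] using this
    exact h1.sub (L.hasFDerivAt)
  have hs : Convex ℝ (Metric.closedBall (0 : E) ‖v‖) := convex_closedBall _ _
  have hbound : ∀ w ∈ Metric.closedBall (0 : E) ‖v‖,
      ‖fderiv ℝ j (x + w) - L‖ ≤ M * ‖v‖ := by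
    intro w hw
    calc ‖fderiv ℝ j (x + w) - fderiv ℝ j x‖ ≤ M * ‖(x + w) - x‖ :=
          aux_lip j hj M hM _ _
      _ = M * ‖w‖ := by rw [add_sub_cancel_left]
      _ ≤ M * ‖v‖ := by
          apply mul_le_mul_of_nonneg_left _ (le_trans (norm_nonneg _) (hM x))
          simpa using hw
  have := hs.norm_image_sub_le_of_norm_hasFDerivWithin_le
    (fun w hw => (key w).hasFDerivWithinAt) hbound
    (Metric.mem_closedBall_self (norm_nonneg v)) (mem_closedBall_zero_iff.mpr le_rfl)
  simp only [add_zero, map_zero, sub_zero] at this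
  calc ‖j (x + v) - j x - L v‖ = ‖(j (x + v) - L v) - (j x)‖ := by rw [sub_right_comm]
    _ ≤ M * ‖v‖ * ‖v‖ := this
    _ = M * ‖v‖ ^ 2 := by ring

lemma aux_isotropy (K : ℝ → ℝ) (L : E →L[ℝ] E) :
    (∫ z : E, K ‖z‖ • L z) = 0 := by
  have h := integral_neg_eq_self (fun z : E => K ‖z‖ • L z) volume
  have h2 : (∫ z : E, K ‖(-z)‖ • L (-z)) = - ∫ z : E, K ‖z‖ • L z := by
    simp only [norm_neg, map_neg, smul_neg]
    exact integral_neg _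
  rw [h2] at h
  have h3 : (∫ z : E, K ‖z‖ • L z) + (∫ z : E, K ‖z‖ • L z) = 0 :=
    add_eq_zero_iff_eq_neg.mpr h.symm
  have h4 : (2 : ℝ) • (∫ z : E, K ‖z‖ • L z) = 0 := by rw [two_smul]; exact h3
  rcases smul_eq_zero.mp h4 with h5 | h5
  · norm_num at h5
  · exact h5

theorem isotropic_kernel_expansion_second_order
    (K : ℝ → ℝ) (hK : Continuous K) (hKsupp : HasCompactSupport K)
    (j : EuclideanSpace ℝ (Fin 3) → EuclideanSpace ℝ (Fin 3))
    (hj : ContDiff ℝ 2 j)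
    (hj2 : ∃ M : ℝ, ∀ y : EuclideanSpace ℝ (Fin 3), ‖iteratedFDeriv ℝ 2 j y‖ ≤ M)
    (x : EuclideanSpace ℝ (Fin 3)) :
    ∃ C : ℝ, 0 ≤ C ∧ ∀ ε : ℝ, ε ∈ Set.Ioc (0 : ℝ) 1 →
      ‖(∫ z : EuclideanSpace ℝ (Fin 3), K ‖z‖ • j (x + ε • z))
          - (∫ z : EuclideanSpace ℝ (Fin 3), K ‖z‖) • j x‖ ≤ C * ε ^ 2 := by
  obtain ⟨M, hM⟩ := hj2
  have hM0 : 0 ≤ M := le_trans (norm_nonneg _) (hM x)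
  set L := fderiv ℝ j x with hL
  have hcj : Continuous j := hj.continuous
  set C : ℝ := M * ∫ z : E, |K ‖z‖| * ‖z‖ ^ 2 with hC
  have hIabs : Integrable (fun z : E => |K ‖z‖| * ‖z‖ ^ 2) := by
    have := aux_integrable (fun t => |K t|) (hK.abs)
      (hKsupp.abs) (fun z : E => ‖z‖ ^ 2) (continuous_norm.pow 2)
    simpa [smul_eq_mul] using this
  have hCnn : 0 ≤ C := by
    apply mul_nonneg hM0
    apply integral_nonneg
    intro z; positivity
  refine ⟨C, hCnn, fun ε hε => ?_⟩
  obtain ⟨hε0, hε1⟩ := hε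
  -- integrability facts
  have hint1 : Integrable (fun z : E => K ‖z‖ • j (x + ε • z)) :=
    aux_integrable K hK hKsupp _
      (hcj.comp (continuous_const.add (continuous_const_smul ε)))
  have hint2 : Integrable (fun z : E => K ‖z‖ • j x) :=
    aux_integrable K hK hKsupp _ continuous_const
  have hint3 : Integrable (fun z : E => K ‖z‖ • L (ε • z)) :=
    aux_integrable K hK hKsupp _ (L.continuous.comp (continuous_const_smul ε))
  -- the L-term integrates to 0
  have hzero : (∫ z : E, K ‖z‖ • L (ε • z)) = 0 := by
    have : (fun z : E => K ‖z‖ • L (ε • z)) = fun z : E => ε • (K ‖z‖ • L z) := by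
      funext z; rw [L.map_smul, smul_comm]
    rw [this, integral_smul, aux_isotropy K L, smul_zero]
  -- key rewriting
  have hkey : (∫ z : E, K ‖z‖ • j (x + ε • z)) - (∫ z : E, K ‖z‖) • j x
      = ∫ z : E, K ‖z‖ • (j (x + ε • z) - j x - L (ε • z)) := by
    have hsplit : ∀ z : E, K ‖z‖ • (j (x + ε • z) - j x - L (ε • z))
        = K ‖z‖ • j (x + ε • z) - K ‖z‖ • j x - K ‖z‖ • L (ε • z) := by
      intro z; rw [smul_sub, smul_sub]
    have hi12 : Integrable (fun z : E => K ‖z‖ • j (x + ε • z) - K ‖z‖ • j x) :=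
      hint1.sub hint2
    rw [integral_congr_ae (Filter.Eventually.of_forall hsplit)]
    rw [integral_sub hi12 hint3, integral_sub hint1 hint2]
    rw [integral_smul_const, hzero, sub_zero]
  rw [hkey]
  -- bound
  have hbd : ∀ z : E, ‖K ‖z‖ • (j (x + ε • z) - j x - L (ε • z))‖
      ≤ |K ‖z‖| * (M * ε ^ 2 * ‖z‖ ^ 2) := by
    intro z
    rw [norm_smul, Real.norm_eq_abs]
    apply mul_le_mul_of_nonneg_left _ (abs_nonneg _)
    calc ‖j (x + ε • z) - j x - L (ε • z)‖ ≤ M * ‖ε • z‖ ^ 2 :=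
        aux_taylor j hj M hM x (ε • z)
      _ = M * ε ^ 2 * ‖z‖ ^ 2 := by
        rw [norm_smul, Real.norm_eq_abs, mul_pow, sq_abs]; ring
  have hgint : Integrable (fun z : E => |K ‖z‖| * (M * ε ^ 2 * ‖z‖ ^ 2)) := by
    have := aux_integrable (fun t => |K t|) hK.abs hKsupp.abs
      (fun z : E => M * ε ^ 2 * ‖z‖ ^ 2) (continuous_const.mul (continuous_norm.pow 2))
    simpa [smul_eq_mul] using this
  calc ‖∫ z : E, K ‖z‖ • (j (x + ε • z) - j x - L (ε • z))‖
      ≤ ∫ z : E, |K ‖z‖| * (M * ε ^ 2 * ‖z‖ ^ 2) :=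
        norm_integral_le_of_norm_le hgint (Filter.Eventually.of_forall hbd)
    _ = C * ε ^ 2 := by
        have : ∀ z : E, |K ‖z‖| * (M * ε ^ 2 * ‖z‖ ^ 2)
            = (M * ε ^ 2) * (|K ‖z‖| * ‖z‖ ^ 2) := fun z => by ring
        rw [integral_congr_ae (Filter.Eventually.of_forall this)]
        have h6 := integral_smul (μ := (volume : Measure E)) (M * ε ^ 2)
          (fun z : E => |K ‖z‖| * ‖z‖ ^ 2)
        simp only [smul_eq_mul] at h6
        rw [h6, hC]; ring
end

section
/- Let ν : [−1,1] → (0,∞) be continuous, d > 0, and σ an antiderivative of ν on [−1,1]. Suppose g : [−1,1] → ℝ is twice continuously differentiable and satisfies, for all μ ∈ [−1,1], −(1−μ²) d/dμ( e^{σ(μ)/d} (1−μ²) g'(μ) ) + e^{σ(μ)/d} g(μ) = −(1−μ²)^{3/2} e^{σ(μ)/d}. Then g(μ) ≤ 0 for all μ ∈ [−1,1]. -/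
open Real Set

/-- Maximum principle for the radial part of the generalized collision invariant:
any `C²` solution `g` of
`−(1−μ²) (e^{σ/d}(1−μ²)g')' + e^{σ/d} g = −(1−μ²)^{3/2} e^{σ/d}` on `[−1,1]`
is nonpositive. -/
theorem gci_radial_part_nonpositive
    (ν σ : ℝ → ℝ) (hν : ContinuousOn ν (Icc (-1) 1))
    (hνpos : ∀ μ ∈ Icc (-1 : ℝ) 1, 0 < ν μ)
    (hσ : ∀ μ ∈ Icc (-1 : ℝ) 1, HasDerivAt σ (ν μ) μ)
    (d : ℝ) (hd : 0 < d)
    (g : ℝ → ℝ) (hg : ContDiffOn ℝ 2 g (Icc (-1) 1))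
    (heq : ∀ μ ∈ Icc (-1 : ℝ) 1,
      -(1 - μ ^ 2) *
          derivWithin
            (fun s => Real.exp (σ s / d) * ((1 - s ^ 2) * derivWithin g (Icc (-1) 1) s))
            (Icc (-1) 1) μ
        + Real.exp (σ μ / d) * g μ
        = -((1 - μ ^ 2) ^ ((3 : ℝ) / 2)) * Real.exp (σ μ / d)) :
    ∀ μ ∈ Icc (-1 : ℝ) 1, g μ ≤ 0 := by
  have hUD : UniqueDiffOn ℝ (Icc (-1 : ℝ) 1) := uniqueDiffOn_Icc (by norm_num)
  have hgd : DifferentiableOn ℝ g (Icc (-1 : ℝ) 1) :=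
    hg.differentiableOn (by norm_num)
  have hg' : ContDiffOn ℝ 1 (derivWithin g (Icc (-1 : ℝ) 1)) (Icc (-1 : ℝ) 1) :=
    hg.derivWithin hUD (by norm_num)
  set G : ℝ → ℝ := derivWithin g (Icc (-1 : ℝ) 1) with hGdef
  set F : ℝ → ℝ := fun s => Real.exp (σ s / d) * ((1 - s ^ 2) * G s) with hFdef
  -- continuity of F on Icc
  have hσc : ContinuousOn σ (Icc (-1 : ℝ) 1) := fun x hx =>
    (hσ x hx).continuousAt.continuousWithinAt
  have hFc : ContinuousOn F (Icc (-1 : ℝ) 1) := by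
    exact (Real.continuous_exp.comp_continuousOn (hσc.div_const d)).mul
      (((continuous_const.sub (continuous_pow 2)).continuousOn).mul hg'.continuousOn)
  -- differentiability of F within Icc
  have hFd : ∀ x ∈ Icc (-1 : ℝ) 1, DifferentiableWithinAt ℝ F (Icc (-1 : ℝ) 1) x := by
    intro x hx
    exact (((hσ x hx).differentiableAt.differentiableWithinAt.div_const d).exp).mul
      (((differentiableWithinAt_const _).sub
        ((differentiable_pow 2).differentiableAt.differentiableWithinAt)).mul
        (hg'.differentiableOn (by norm_num) x hx))
  -- boundary values
  have hone : g 1 = 0 := by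
    have h := heq 1 (by norm_num)
    rw [show (1 : ℝ) - 1 ^ 2 = 0 by norm_num,
      Real.zero_rpow (by norm_num : (3 : ℝ) / 2 ≠ 0)] at h
    simp only [neg_zero, zero_mul, zero_add] at h
    exact (mul_eq_zero.mp h).resolve_left (Real.exp_ne_zero _)
  have hmone : g (-1) = 0 := by
    have h := heq (-1) (by norm_num)
    rw [show (1 : ℝ) - (-1) ^ 2 = 0 by norm_num,
      Real.zero_rpow (by norm_num : (3 : ℝ) / 2 ≠ 0)] at h
    simp only [neg_zero, zero_mul, zero_add] at h
    exact (mul_eq_zero.mp h).resolve_left (Real.exp_ne_zero _)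
  -- maximum point
  intro μ hμ
  by_contra hpos
  push_neg at hpos
  obtain ⟨μ₀, hμ₀I, hmax⟩ := isCompact_Icc.exists_isMaxOn
    (nonempty_Icc.mpr (by norm_num)) hg.continuousOn
  have hM : 0 < g μ₀ := lt_of_lt_of_le hpos (hmax hμ)
  have hμ₀o : μ₀ ∈ Ioo (-1 : ℝ) 1 := by
    rcases hμ₀I with ⟨h1, h2⟩
    constructor
    · rcases lt_or_eq_of_le h1 with h | h
      · exact h
      · exfalso; rw [← h, hmone] at hM; exact lt_irrefl 0 hM
    · rcases lt_or_eq_of_le h2 with h | h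
      · exact h
      · exfalso; rw [h, hone] at hM; exact lt_irrefl 0 hM
  -- the set where g ≤ 0 to the left of μ₀
  set S : Set ℝ := Icc (-1 : ℝ) μ₀ ∩ g ⁻¹' Iic 0 with hSdef
  have hIccsub : Icc (-1 : ℝ) μ₀ ⊆ Icc (-1 : ℝ) 1 := Icc_subset_Icc le_rfl hμ₀o.2.le
  have hSclosed : IsClosed S :=
    (hg.continuousOn.mono hIccsub).preimage_isClosed_of_isClosed isClosed_Icc isClosed_Iic
  have hScomp : IsCompact S := isCompact_Icc.of_isClosed_subset hSclosed inter_subset_left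
  have hSne : S.Nonempty := ⟨-1, ⟨le_rfl, hμ₀o.1.le⟩, by simp [hmone]⟩
  set a : ℝ := sSup S with hadef
  have haS : a ∈ S := hScomp.sSup_mem hSne
  have hga : g a ≤ 0 := haS.2
  have ha1 : -1 ≤ a := haS.1.1
  have haμ₀ : a < μ₀ := lt_of_le_of_ne haS.1.2 (by
    intro h; rw [h] at hga; exact absurd hM (not_lt.mpr hga))
  -- g > 0 on (a, μ₀]
  have hgpos : ∀ x, a < x → x ≤ μ₀ → 0 < g x := by
    intro x hax hxμ₀
    by_contra h
    push_neg at h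
    have hxS : x ∈ S := ⟨⟨le_trans ha1 hax.le, hxμ₀⟩, h⟩
    exact absurd (le_csSup ⟨μ₀, fun y hy => hy.1.2⟩ hxS) (not_le.mpr hax)
  -- derivative facts on the open interval
  have hsub : Ioo a μ₀ ⊆ Ioo (-1 : ℝ) 1 := fun x hx =>
    ⟨lt_of_le_of_lt ha1 hx.1, lt_trans hx.2 hμ₀o.2⟩
  have hFderiv : ∀ x ∈ Ioo a μ₀, HasDerivAt F (derivWithin F (Icc (-1 : ℝ) 1) x) x := by
    intro x hx
    have hxo := hsub hx
    exact ((hFd x (Ioo_subset_Icc_self hxo)).hasDerivWithinAt).hasDerivAt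
      (Icc_mem_nhds hxo.1 hxo.2)
  have hFpos : ∀ x ∈ Ioo a μ₀, 0 < deriv F x := by
    intro x hx
    have hxo := hsub hx
    have hxI : x ∈ Icc (-1 : ℝ) 1 := Ioo_subset_Icc_self hxo
    have h1x : 0 < 1 - x ^ 2 := by nlinarith [hxo.1, hxo.2]
    have hE : 0 < Real.exp (σ x / d) := Real.exp_pos _
    have hgx : 0 < g x := hgpos x hx.1 hx.2.le
    have h := heq x hxI
    have hrp : 0 ≤ (1 - x ^ 2) ^ ((3 : ℝ) / 2) := Real.rpow_nonneg h1x.le _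
    have hd' : deriv F x = derivWithin F (Icc (-1 : ℝ) 1) x := (hFderiv x hx).deriv
    rw [hd']
    nlinarith [mul_pos hE hgx, mul_nonneg hrp hE.le]
  have hFmono : StrictMonoOn F (Icc a μ₀) := by
    refine strictMonoOn_of_deriv_pos (convex_Icc a μ₀)
      (hFc.mono (Icc_subset_Icc (by linarith) hμ₀o.2.le)) ?_
    intro x hx
    rw [interior_Icc] at hx
    exact hFpos x hx
  -- derivative of g vanishes at μ₀
  have hgderμ₀ : HasDerivAt g (G μ₀) μ₀ :=
    ((hgd μ₀ hμ₀I).hasDerivWithinAt).hasDerivAt (Icc_mem_nhds hμ₀o.1 hμ₀o.2)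
  have hG0 : G μ₀ = 0 :=
    (hmax.isLocalMax (Icc_mem_nhds hμ₀o.1 hμ₀o.2)).hasDerivAt_eq_zero hgderμ₀
  have hFμ₀ : F μ₀ = 0 := by rw [hFdef]; simp [hG0]
  -- g' < 0 on (a, μ₀)
  have hgder : ∀ x ∈ Ioo a μ₀, HasDerivAt g (G x) x := by
    intro x hx
    have hxo := hsub hx
    exact ((hgd x (Ioo_subset_Icc_self hxo)).hasDerivWithinAt).hasDerivAt
      (Icc_mem_nhds hxo.1 hxo.2)
  have hganti : StrictAntiOn g (Icc a μ₀) := by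
    refine strictAntiOn_of_deriv_neg (convex_Icc a μ₀)
      (hg.continuousOn.mono (Icc_subset_Icc (by linarith) hμ₀o.2.le)) ?_
    intro x hx
    rw [interior_Icc] at hx
    have hxo := hsub hx
    have hFx : F x < 0 := by
      have := hFmono (Ioo_subset_Icc_self hx) (right_mem_Icc.mpr haμ₀.le) hx.2
      rwa [hFμ₀] at this
    have h1x : 0 < 1 - x ^ 2 := by nlinarith [hxo.1, hxo.2]
    have hE : 0 < Real.exp (σ x / d) := Real.exp_pos _
    have hGx : G x < 0 := by
      by_contra h
      push_neg at h
      have : 0 ≤ F x := by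
        rw [hFdef]
        exact mul_nonneg hE.le (mul_nonneg h1x.le h)
      linarith
    rw [(hgder x hx).deriv]
    exact hGx
  have : g μ₀ < g a :=
    hganti (left_mem_Icc.mpr haμ₀.le) (right_mem_Icc.mpr haμ₀.le) haμ₀
  linarith
end

section
/- Let ν : [−1,1] → (0,∞) be continuous, d > 0, σ an antiderivative of ν, and let g : [−1,1] → ℝ be twice continuously differentiable and satisfy, for μ ∈ (−1,1), −(1−μ²) d/dμ( e^{σ(μ)/d} (1−μ²) g'(μ) ) + e^{σ(μ)/d} g(μ) = −(1−μ²)^{3/2} e^{σ(μ)/d}. Define ψ(θ,φ) = −g(cos θ) sin φ. Then for all θ ∈ (0,π) and φ ∈ ℝ, (1/sin θ) ∂_θ( sin θ · e^{σ(cos θ)/d} · ∂_θ ψ(θ,φ) ) + ( e^{σ(cos θ)/d} / sin² θ ) ∂²_{φφ} ψ(θ,φ) = − sin φ · sin θ · e^{σ(cos θ)/d}. -/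
open Real Set

/-- The separated ansatz `ψ(θ,φ) = −g(cos θ) sin φ` solves the generalized collision
invariant equation `∇_ω·(M_Ω ∇_ω ψ) = −sin φ sin θ M_Ω` in spherical coordinates,
when `g` solves the reduced one-dimensional elliptic equation. -/
theorem separated_ansatz_solves_gci_equation
    (ν σ : ℝ → ℝ) (hν : ContinuousOn ν (Icc (-1) 1))
    (hνpos : ∀ μ ∈ Icc (-1 : ℝ) 1, 0 < ν μ)
    (hσ : ∀ μ ∈ Icc (-1 : ℝ) 1, HasDerivAt σ (ν μ) μ)
    (d : ℝ) (hd : 0 < d)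
    (g : ℝ → ℝ) (hg : ContDiffOn ℝ 2 g (Icc (-1) 1))
    (heq : ∀ μ ∈ Ioo (-1 : ℝ) 1,
      -(1 - μ ^ 2) *
          deriv (fun s => Real.exp (σ s / d) * ((1 - s ^ 2) * deriv g s)) μ
        + Real.exp (σ μ / d) * g μ
        = -((1 - μ ^ 2) ^ ((3 : ℝ) / 2)) * Real.exp (σ μ / d))
    (ψ : ℝ → ℝ → ℝ) (hψ : ∀ θ φ : ℝ, ψ θ φ = -g (Real.cos θ) * Real.sin φ) :
    ∀ θ ∈ Ioo (0 : ℝ) Real.pi, ∀ φ : ℝ,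
      (1 / Real.sin θ) *
          deriv (fun t => Real.sin t * Real.exp (σ (Real.cos t) / d) *
            deriv (fun s => ψ s φ) t) θ
        + (Real.exp (σ (Real.cos θ) / d) / Real.sin θ ^ 2) *
            deriv (deriv (fun p => ψ θ p)) φ
        = -(Real.sin φ * Real.sin θ * Real.exp (σ (Real.cos θ) / d)) := by
  intro θ hθ φ
  obtain ⟨hθ0, hθπ⟩ := hθ
  have hsin : 0 < Real.sin θ := Real.sin_pos_of_pos_of_lt_pi hθ0 hθπ
  have hs0 : Real.sin θ ≠ 0 := ne_of_gt hsin
  have pyth := Real.sin_sq_add_cos_sq θ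
  have hμsq : Real.cos θ ^ 2 < 1 := by nlinarith
  have hμ : Real.cos θ ∈ Ioo (-1 : ℝ) 1 := ⟨by nlinarith, by nlinarith⟩
  have hsin2 : Real.sin θ ^ 2 = 1 - Real.cos θ ^ 2 := by nlinarith
  -- regularity of g at interior points
  have hgC : ∀ x ∈ Ioo (-1 : ℝ) 1, ContDiffAt ℝ 2 g x := fun x hx =>
    (hg.mono Ioo_subset_Icc_self).contDiffAt (isOpen_Ioo.mem_nhds hx)
  have hg' : ∀ x ∈ Ioo (-1 : ℝ) 1, HasDerivAt g (deriv g x) x := fun x hx =>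
    ((hgC x hx).differentiableAt (by norm_num)).hasDerivAt
  have hdg : DifferentiableAt ℝ (deriv g) (Real.cos θ) := by
    have h2 : ContDiffOn ℝ 1 (deriv g) (Ioo (-1 : ℝ) 1) :=
      (hg.mono Ioo_subset_Icc_self).deriv_of_isOpen isOpen_Ioo (by norm_num)
    exact (h2.differentiableOn one_ne_zero).differentiableAt (isOpen_Ioo.mem_nhds hμ)
  set F : ℝ → ℝ := fun s => Real.exp (σ s / d) * ((1 - s ^ 2) * deriv g s) with hFdef
  -- F is differentiable at cos θ
  have hE : HasDerivAt (fun s => Real.exp (σ s / d))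
      (Real.exp (σ (Real.cos θ) / d) * (ν (Real.cos θ) / d)) (Real.cos θ) :=
    ((hσ _ (Ioo_subset_Icc_self hμ)).div_const d).exp
  have hq : HasDerivAt (fun s : ℝ => 1 - s ^ 2) (-(2 * Real.cos θ ^ 1)) (Real.cos θ) :=
    (hasDerivAt_pow 2 (Real.cos θ)).const_sub 1
  have hP : HasDerivAt (fun s : ℝ => (1 - s ^ 2) * deriv g s)
      (-(2 * Real.cos θ ^ 1) * deriv g (Real.cos θ)
        + (1 - Real.cos θ ^ 2) * deriv (deriv g) (Real.cos θ)) (Real.cos θ) :=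
    hq.mul hdg.hasDerivAt
  have hF : DifferentiableAt ℝ F (Real.cos θ) := (hE.mul hP).differentiableAt
  -- second derivative in φ
  have hφfun : (fun p => ψ θ p) = fun p => -g (Real.cos θ) * Real.sin p :=
    funext fun p => hψ θ p
  have hφ1 : deriv (fun p => ψ θ p) = fun p => -g (Real.cos θ) * Real.cos p := by
    rw [hφfun]
    funext x
    exact ((Real.hasDerivAt_sin x).const_mul _).deriv
  have hφ2 : deriv (deriv (fun p => ψ θ p)) φ = g (Real.cos θ) * Real.sin φ := by
    rw [hφ1]
    have := ((Real.hasDerivAt_cos φ).const_mul (-g (Real.cos θ))).deriv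
    rw [this]; ring
  -- the θ-derivative function agrees with sin φ * F ∘ cos near θ
  have hagree : ∀ t : ℝ, Real.cos t ∈ Ioo (-1 : ℝ) 1 →
      Real.sin t * Real.exp (σ (Real.cos t) / d) * deriv (fun s => ψ s φ) t
        = Real.sin φ * F (Real.cos t) := by
    intro t ht
    have hfun : (fun s => ψ s φ) = fun s => -g (Real.cos s) * Real.sin φ :=
      funext fun s => hψ s φ
    have hin : HasDerivAt (fun s => -g (Real.cos s) * Real.sin φ)
        (-(deriv g (Real.cos t) * -Real.sin t) * Real.sin φ) t :=
      (((hg' _ ht).comp t (Real.hasDerivAt_cos t)).neg).mul_const _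
    rw [hfun, hin.deriv, hFdef]
    have pytht := Real.sin_sq_add_cos_sq t
    linear_combination
      (Real.exp (σ (Real.cos t) / d) * deriv g (Real.cos t) * Real.sin φ) * pytht
  have hUopen : IsOpen {t : ℝ | Real.cos t ∈ Ioo (-1 : ℝ) 1} :=
    isOpen_Ioo.preimage Real.continuous_cos
  have hev : (fun t => Real.sin t * Real.exp (σ (Real.cos t) / d) *
      deriv (fun s => ψ s φ) t) =ᶠ[nhds θ] fun t => Real.sin φ * F (Real.cos t) :=
    Filter.eventuallyEq_of_mem (hUopen.mem_nhds hμ) hagree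
  have hcomp : HasDerivAt (fun t => Real.sin φ * F (Real.cos t))
      (Real.sin φ * (deriv F (Real.cos θ) * -Real.sin θ)) θ :=
    ((hF.hasDerivAt.comp θ (Real.hasDerivAt_cos θ)).const_mul _)
  have hθderiv : deriv (fun t => Real.sin t * Real.exp (σ (Real.cos t) / d) *
      deriv (fun s => ψ s φ) t) θ
      = Real.sin φ * (deriv F (Real.cos θ) * -Real.sin θ) := by
    rw [hev.deriv_eq, hcomp.deriv]
  -- the reduced equation at μ = cos θ
  have key := heq (Real.cos θ) hμ
  have h32 : ((1 - Real.cos θ ^ 2 : ℝ)) ^ ((3 : ℝ) / 2) = Real.sin θ ^ 3 := by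
    rw [← hsin2, ← Real.rpow_natCast (Real.sin θ) 2, ← Real.rpow_mul hsin.le]
    rw [show ((2 : ℕ) : ℝ) * ((3 : ℝ) / 2) = ((3 : ℕ) : ℝ) by norm_num,
      Real.rpow_natCast]
  rw [h32] at key
  rw [hθderiv, hφ2]
  have hsq0 : Real.sin θ ^ 2 ≠ 0 := pow_ne_zero 2 hs0
  field_simp
  linear_combination (Real.sin φ) * key
    - (Real.sin φ * deriv F (Real.cos θ)) * pyth
end

section
/- Let ρ > 0, c, θ ∈ ℝ and λ ≥ 0, and let A be the real 3×3 matrix with rows (cos θ, −ρ sin θ, 0), (−λ sin θ / ρ, c cos θ, 0), (0, 0, c cos θ). Then all eigenvalues of A are real, and they are exactly γ₀ = c cos θ and γ± = (1/2)[ (c+1) cos θ ± ( (c−1)² cos² θ + 4 λ sin² θ )^{1/2} ]. -/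
/-- All eigenvalues of the wave matrix of the hydrodynamic Couzin–Vicsek model are real,
and they are exactly `γ₀ = c cos θ` and
`γ± = (1/2)[(c+1)cos θ ± ((c−1)²cos²θ + 4λ sin²θ)^{1/2}]`. -/
theorem eigenvalues_of_CV_wave_matrix
    (ρ c θ lam : ℝ) (hρ : 0 < ρ) (hlam : 0 ≤ lam) :
    spectrum ℂ
        ((!![Real.cos θ, -ρ * Real.sin θ, 0;
             -lam * Real.sin θ / ρ, c * Real.cos θ, 0;
             0, 0, c * Real.cos θ]).map (Complex.ofReal))
      = {((c * Real.cos θ : ℝ) : ℂ),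
         (((1 / 2) * ((c + 1) * Real.cos θ +
            Real.sqrt ((c - 1) ^ 2 * Real.cos θ ^ 2 + 4 * lam * Real.sin θ ^ 2)) : ℝ) : ℂ),
         (((1 / 2) * ((c + 1) * Real.cos θ -
            Real.sqrt ((c - 1) ^ 2 * Real.cos θ ^ 2 + 4 * lam * Real.sin θ ^ 2)) : ℝ) : ℂ)} := by
  set D : ℝ := (c - 1) ^ 2 * Real.cos θ ^ 2 + 4 * lam * Real.sin θ ^ 2 with hD
  have hD0 : 0 ≤ D := by positivity
  have hs2 : (Real.sqrt D : ℂ) ^ 2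
      = ((c:ℂ) - 1) ^ 2 * Complex.cos (θ:ℂ) ^ 2 + 4 * (lam:ℂ) * Complex.sin (θ:ℂ) ^ 2 := by
    rw [← Complex.ofReal_pow, Real.sq_sqrt hD0]
    push_cast [hD]
    ring
  have hρ' : (ρ : ℂ) ≠ 0 := Complex.ofReal_ne_zero.mpr hρ.ne'
  ext μ
  rw [spectrum.mem_iff, Matrix.isUnit_iff_isUnit_det, isUnit_iff_ne_zero, not_not]
  have hq : (μ - (((1 / 2) * ((c + 1) * Real.cos θ + Real.sqrt D) : ℝ) : ℂ))
      * (μ - (((1 / 2) * ((c + 1) * Real.cos θ - Real.sqrt D) : ℝ) : ℂ))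
      = μ ^ 2 - ((c:ℂ) + 1) * Complex.cos (θ:ℂ) * μ
        + ((c:ℂ) * Complex.cos (θ:ℂ) ^ 2 - (lam:ℂ) * Complex.sin (θ:ℂ) ^ 2) := by
    push_cast
    linear_combination (-(1:ℂ)/4) * hs2
  have hdet : (algebraMap ℂ (Matrix (Fin 3) (Fin 3) ℂ) μ -
      (!![Real.cos θ, -ρ * Real.sin θ, 0;
          -lam * Real.sin θ / ρ, c * Real.cos θ, 0;
          0, 0, c * Real.cos θ]).map (Complex.ofReal)).det
      = (μ - (c * Real.cos θ : ℝ))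
        * (μ - ((1 / 2) * ((c + 1) * Real.cos θ + Real.sqrt D) : ℝ))
        * (μ - ((1 / 2) * ((c + 1) * Real.cos θ - Real.sqrt D) : ℝ)) := by
    rw [mul_assoc, hq]
    simp only [Matrix.det_fin_three, Matrix.sub_apply, Matrix.algebraMap_eq_diagonal,
      Matrix.diagonal_apply, Matrix.map_apply, Matrix.cons_val', Matrix.cons_val_zero,
      Matrix.cons_val_one, Matrix.head_cons, Matrix.empty_val', Matrix.cons_val_fin_one,
      Matrix.head_fin_const, Matrix.cons_val_two, Matrix.tail_cons, Pi.algebraMap_apply,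
      Algebra.algebraMap_self, RingHom.id_apply]
    norm_num
    push_cast
    field_simp
    ring
  rw [hdet]
  simp only [Set.mem_insert_iff, Set.mem_singleton_iff, mul_eq_zero, sub_eq_zero]
  tauto
end

section
/- Let ρ > 0, c ∈ ℝ, λ > 0 and θ ∈ ℝ with sin θ ≠ 0, and let A be the real 3×3 matrix with rows (cos θ, −ρ sin θ, 0), (−λ sin θ / ρ, c cos θ, 0), (0, 0, c cos θ). Then the three eigenvalues γ₀ = c cos θ and γ± = (1/2)[ (c+1) cos θ ± ( (c−1)² cos² θ + 4 λ sin² θ )^{1/2} ] are pairwise distinct and real; consequently A is diagonalizable over ℝ, i.e., the system of the hydrodynamic limit of the Couzin–Vicsek model is hyperbolic in directions not parallel to the velocity director. -/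
/-- For waves not parallel to the velocity director (`sin θ ≠ 0`, `λ > 0`), the three
eigenvalues `γ₀`, `γ₊`, `γ₋` are pairwise distinct and real and the wave matrix is
diagonalizable over `ℝ`: the hydrodynamic limit of the Couzin–Vicsek model is hyperbolic. -/
theorem CV_wave_matrix_hyperbolic
    (ρ c lam θ : ℝ) (hρ : 0 < ρ) (hlam : 0 < lam) (hθ : Real.sin θ ≠ 0) :
    (c * Real.cos θ ≠
        (1 / 2) * ((c + 1) * Real.cos θ +
          Real.sqrt ((c - 1) ^ 2 * Real.cos θ ^ 2 + 4 * lam * Real.sin θ ^ 2)) ∧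
      c * Real.cos θ ≠
        (1 / 2) * ((c + 1) * Real.cos θ -
          Real.sqrt ((c - 1) ^ 2 * Real.cos θ ^ 2 + 4 * lam * Real.sin θ ^ 2)) ∧
      (1 / 2) * ((c + 1) * Real.cos θ +
          Real.sqrt ((c - 1) ^ 2 * Real.cos θ ^ 2 + 4 * lam * Real.sin θ ^ 2)) ≠
        (1 / 2) * ((c + 1) * Real.cos θ -
          Real.sqrt ((c - 1) ^ 2 * Real.cos θ ^ 2 + 4 * lam * Real.sin θ ^ 2))) ∧
    ∃ P : Matrix (Fin 3) (Fin 3) ℝ, IsUnit P.det ∧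
      (!![Real.cos θ, -ρ * Real.sin θ, 0;
          -lam * Real.sin θ / ρ, c * Real.cos θ, 0;
          0, 0, c * Real.cos θ])
        = P * Matrix.diagonal
            ![c * Real.cos θ,
              (1 / 2) * ((c + 1) * Real.cos θ +
                Real.sqrt ((c - 1) ^ 2 * Real.cos θ ^ 2 + 4 * lam * Real.sin θ ^ 2)),
              (1 / 2) * ((c + 1) * Real.cos θ -
                Real.sqrt ((c - 1) ^ 2 * Real.cos θ ^ 2 + 4 * lam * Real.sin θ ^ 2))] * P⁻¹ := by
  have hsin2 : 0 < Real.sin θ ^ 2 := by positivity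
  have hD : 0 < (c - 1) ^ 2 * Real.cos θ ^ 2 + 4 * lam * Real.sin θ ^ 2 := by
    have h1 : 0 ≤ (c - 1) ^ 2 * Real.cos θ ^ 2 := by positivity
    nlinarith
  set s := Real.sqrt ((c - 1) ^ 2 * Real.cos θ ^ 2 + 4 * lam * Real.sin θ ^ 2) with hs_def
  have hs_pos : 0 < s := Real.sqrt_pos.mpr hD
  have hs2 : s ^ 2 = (c - 1) ^ 2 * Real.cos θ ^ 2 + 4 * lam * Real.sin θ ^ 2 :=
    Real.sq_sqrt hD.le
  have hp : (Real.cos θ - (1 / 2) * ((c + 1) * Real.cos θ + s)) *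
      (c * Real.cos θ - (1 / 2) * ((c + 1) * Real.cos θ + s)) = lam * Real.sin θ ^ 2 := by
    linear_combination (1 / 4 : ℝ) * hs2
  have hq : (Real.cos θ - (1 / 2) * ((c + 1) * Real.cos θ - s)) *
      (c * Real.cos θ - (1 / 2) * ((c + 1) * Real.cos θ - s)) = lam * Real.sin θ ^ 2 := by
    linear_combination (1 / 4 : ℝ) * hs2
  refine ⟨⟨?_, ?_, ?_⟩, ?_⟩
  · intro h
    have hseq : s = (c - 1) * Real.cos θ := by linarith
    nlinarith
  · intro h
    have hseq : s = -((c - 1) * Real.cos θ) := by linarith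
    nlinarith
  · intro h
    linarith
  · set γp := (1 / 2) * ((c + 1) * Real.cos θ + s) with hγp
    set γq := (1 / 2) * ((c + 1) * Real.cos θ - s) with hγq
    have hρ' := hρ.ne'
    have hne : ρ * Real.sin θ * s ≠ 0 := mul_ne_zero (mul_ne_zero hρ' hθ) hs_pos.ne'
    refine ⟨!![0, ρ * Real.sin θ, ρ * Real.sin θ;
              0, Real.cos θ - γp, Real.cos θ - γq;
              1, 0, 0], ?_, ?_⟩
    case refine_4.refine_1 =>
      rw [Matrix.det_fin_three]
      norm_num [Matrix.cons_val_zero, Matrix.cons_val_one]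
      intro h0
      apply hne
      have hdiag : ρ * Real.sin θ * s =
          ρ * Real.sin θ * (Real.cos θ - γq) - ρ * Real.sin θ * (Real.cos θ - γp) := by
        rw [hγp, hγq]; ring
      rw [hdiag]
      convert h0 using 1
      simp [Matrix.vecHead, Matrix.vecTail]
    case refine_4.refine_2 =>
      have hdet : IsUnit (!![(0:ℝ), ρ * Real.sin θ, ρ * Real.sin θ;
              0, Real.cos θ - γp, Real.cos θ - γq;
              1, 0, 0]).det := by
        rw [Matrix.det_fin_three]
        norm_num [Matrix.cons_val_zero, Matrix.cons_val_one]
        intro h0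
        apply hne
        have hdiag : ρ * Real.sin θ * s =
            ρ * Real.sin θ * (Real.cos θ - γq) - ρ * Real.sin θ * (Real.cos θ - γp) := by
          rw [hγp, hγq]; ring
        rw [hdiag]
        convert h0 using 1
        simp [Matrix.vecHead, Matrix.vecTail]
      have hAP : (!![Real.cos θ, -ρ * Real.sin θ, 0;
          -lam * Real.sin θ / ρ, c * Real.cos θ, 0;
          0, 0, c * Real.cos θ]) *
          (!![(0:ℝ), ρ * Real.sin θ, ρ * Real.sin θ;
              0, Real.cos θ - γp, Real.cos θ - γq;
              1, 0, 0]) =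
          (!![(0:ℝ), ρ * Real.sin θ, ρ * Real.sin θ;
              0, Real.cos θ - γp, Real.cos θ - γq;
              1, 0, 0]) *
          Matrix.diagonal ![c * Real.cos θ, γp, γq] := by
        ext i j
        fin_cases i <;> fin_cases j <;>
          simp [Matrix.mul_apply, Fin.sum_univ_three, Matrix.diagonal]
        · ring
        · ring
        · field_simp
          linear_combination hp
        · field_simp
          linear_combination hq
      calc (!![Real.cos θ, -ρ * Real.sin θ, 0;
          -lam * Real.sin θ / ρ, c * Real.cos θ, 0;
          0, 0, c * Real.cos θ])
          = (!![Real.cos θ, -ρ * Real.sin θ, 0;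
          -lam * Real.sin θ / ρ, c * Real.cos θ, 0;
          0, 0, c * Real.cos θ]) *
            ((!![(0:ℝ), ρ * Real.sin θ, ρ * Real.sin θ;
              0, Real.cos θ - γp, Real.cos θ - γq;
              1, 0, 0]) * (!![(0:ℝ), ρ * Real.sin θ, ρ * Real.sin θ;
              0, Real.cos θ - γp, Real.cos θ - γq;
              1, 0, 0])⁻¹) := by
            rw [Matrix.mul_nonsing_inv _ hdet, Matrix.mul_one]
        _ = _ := by rw [← Matrix.mul_assoc, hAP, Matrix.mul_assoc]
end
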